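/- arXiv:1505.05771 — 4 statements merged into one kernel-verified Lean document; each statement's English description precedes it below -/
import Mathlib

section
/- If n is even and C, C' are regular cyclic subgroups of Sym(n) (i.e., subgroups of order n acting regularly on the n points, each generated by an n-cycle), then C and C' are conjugate by an element of Alt(n). -/
/-- A permutation group is regular if for all points `x, y` there is a unique
group element carrying `x` to `y`. -/
def IsRegularPermSubgroup {α : Type*} (C : Subgroup (Equiv.Perm α)) : Prop :=
  ∀ x y : α, ∃! g : C, (g : Equiv.Perm α) x = y

lemma exists_cycle_gen {n : ℕ} (hn : 2 ≤ n) (C : Subgroup (Equiv.Perm (Fin n)))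
    (hC : IsCyclic C) (hreg : IsRegularPermSubgroup C) :
    ∃ g : Equiv.Perm (Fin n), C = Subgroup.zpowers g ∧ g.IsCycle ∧
      g.support = Finset.univ := by
  obtain ⟨gen, hgen⟩ := hC.exists_generator
  set g : Equiv.Perm (Fin n) := (gen : Equiv.Perm (Fin n)) with hgdef
  -- an element of C with a fixed point is the identity
  have key : ∀ (c : C) (y : Fin n), (c : Equiv.Perm (Fin n)) y = y → c = 1 := by
    intro c y hcy
    obtain ⟨u, hu, huniq⟩ := hreg y y
    have h1 : c = u := huniq c hcy
    have h2 : (1 : C) = u := huniq 1 rfl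
    rw [h1, h2]
  have hne : (⟨0, by omega⟩ : Fin n) ≠ (⟨1, by omega⟩ : Fin n) := by
    simp [Fin.ext_iff]
  -- g has no fixed point
  have hfree : ∀ y : Fin n, g y ≠ y := by
    intro y hy
    have hgen1 : gen = 1 := key gen y hy
    obtain ⟨c, hc, _⟩ := hreg (⟨0, by omega⟩ : Fin n) (⟨1, by omega⟩ : Fin n)
    obtain ⟨k, hk⟩ := hgen c
    have hc1 : c = 1 := by rw [← hk, hgen1]; exact one_zpow k
    rw [hc1] at hc
    exact hne hc
  -- C = zpowers g
  have hCg : C = Subgroup.zpowers g := by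
    ext c
    constructor
    · intro hc
      obtain ⟨k, hk⟩ := hgen ⟨c, hc⟩
      refine ⟨k, ?_⟩
      have := congrArg (Subtype.val) hk
      simpa using this
    · intro hc
      obtain ⟨k, hk⟩ := hc
      rw [← hk]
      exact zpow_mem gen.2 k
  refine ⟨g, hCg, ⟨⟨0, by omega⟩, hfree _, ?_⟩, ?_⟩
  · intro y _
    obtain ⟨c, hc, _⟩ := hreg (⟨0, by omega⟩ : Fin n) y
    obtain ⟨k, hk⟩ := hgen c
    refine ⟨k, ?_⟩
    have hcv : (c : Equiv.Perm (Fin n)) = g ^ k := by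
      have := congrArg (Subtype.val) hk
      simpa using this.symm
    rw [← hcv]; exact hc
  · ext y
    simp [Equiv.Perm.mem_support, hfree y]

/-- For even `n`, any two regular cyclic subgroups of `Sym(n)` are conjugate by an
element of `Alt(n)`. -/
theorem stmt_1 {n : ℕ} (hn : Even n) (hpos : 0 < n)
    (C C' : Subgroup (Equiv.Perm (Fin n)))
    (hC : IsCyclic C) (hC' : IsCyclic C')
    (hCreg : IsRegularPermSubgroup C) (hC'reg : IsRegularPermSubgroup C') :
    ∃ σ ∈ alternatingGroup (Fin n),
      Subgroup.map (MulAut.conj σ).toMonoidHom C = C' := by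
  have h2 : 2 ≤ n := by
    rcases hn with ⟨k, hk⟩; omega
  obtain ⟨g, hCg, hgc, hgs⟩ := exists_cycle_gen h2 C hC hCreg
  obtain ⟨g', hCg', hgc', hgs'⟩ := exists_cycle_gen h2 C' hC' hC'reg
  have hcard : g.support.card = g'.support.card := by rw [hgs, hgs']
  obtain ⟨τ, hτ⟩ := isConj_iff.mp (hgc.isConj hgc' hcard)
  have hsg : Equiv.Perm.sign g = -1 := by
    have := hgc.sign
    rw [hgs, Finset.card_univ, Fintype.card_fin] at this
    rw [this, hn.neg_one_pow]
  -- key: any conjugator works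
  have main : ∀ σ : Equiv.Perm (Fin n), σ * g * σ⁻¹ = g' →
      Subgroup.map (MulAut.conj σ).toMonoidHom C = C' := by
    intro σ hσ
    rw [hCg, hCg', MonoidHom.map_zpowers, ← hσ]
    congr 1
  rcases Int.units_eq_one_or (Equiv.Perm.sign τ) with h1 | h1
  · exact ⟨τ, Equiv.Perm.mem_alternatingGroup.mpr h1, main τ hτ⟩
  · refine ⟨τ * g, Equiv.Perm.mem_alternatingGroup.mpr ?_, main (τ * g) ?_⟩
    · rw [map_mul, h1, hsg]; norm_num
    · show τ * g * g * (τ * g)⁻¹ = g'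
      rw [← hτ]; group
end

section
/- The 2-closure of a p-subgroup of Sym(X) (X finite) is again a p-group. -/
/-- The 2-closure of a permutation group `G ≤ Sym(X)`: all permutations `π` such that
for every ordered pair `(x, x')` there is `g ∈ G` agreeing with `π` on `x` and `x'`. -/
def twoClosure {X : Type*} (G : Subgroup (Equiv.Perm X)) : Subgroup (Equiv.Perm X) where
  carrier := {π | ∀ x x' : X, ∃ g ∈ G, π x = g x ∧ π x' = g x'}
  one_mem' := fun x x' => ⟨1, G.one_mem, rfl, rfl⟩
  mul_mem' := by
    intro a b ha hb x x'
    obtain ⟨g₂, hg₂, h2, h2'⟩ := hb x x'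
    obtain ⟨g₁, hg₁, h1, h1'⟩ := ha (b x) (b x')
    refine ⟨g₁ * g₂, G.mul_mem hg₁ hg₂, ?_, ?_⟩ <;>
      simp [Equiv.Perm.mul_apply, h1, h1', ← h2, ← h2']
  inv_mem' := by
    intro a ha x x'
    obtain ⟨g, hg, h, h'⟩ := ha (a⁻¹ x) (a⁻¹ x')
    refine ⟨g⁻¹, G.inv_mem hg, ?_, ?_⟩
    · rw [Equiv.Perm.eq_inv_iff_eq, ← h]; simp
    · rw [Equiv.Perm.eq_inv_iff_eq, ← h']; simp

namespace Wielandt2Closure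

open Equiv

variable {X : Type*}

/-- The orbit equivalence relation of the cyclic group generated by `z`. -/
def zrel (z : Perm X) : Setoid X where
  r x y := ∃ i : ℤ, (z ^ i) x = y
  iseqv := by
    refine ⟨fun x => ⟨0, by simp⟩, ?_, ?_⟩
    · rintro x y ⟨i, rfl⟩
      refine ⟨-i, ?_⟩
      rw [← Equiv.Perm.mul_apply, ← zpow_add, neg_add_cancel, zpow_zero, Equiv.Perm.one_apply]
    · rintro x y w ⟨i, rfl⟩ ⟨j, rfl⟩
      exact ⟨j + i, by rw [zpow_add, Equiv.Perm.mul_apply]⟩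

/-- A permutation commuting with `z` descends to the quotient by `zrel z`. -/
lemma respects (z g : Perm X) (hg : Commute z g) :
    ∀ x y, (zrel z) x y → (zrel z) (g x) (g y) := by
  rintro x y ⟨i, rfl⟩
  exact ⟨i, by rw [← Equiv.Perm.mul_apply, (hg.zpow_left i).eq, Equiv.Perm.mul_apply]⟩

def descend (z k : Perm X) (hk : Commute z k) : Perm (Quotient (zrel z)) where
  toFun := Quotient.map' k (respects z k hk)
  invFun := Quotient.map' ⇑k⁻¹ (respects z k⁻¹ hk.inv_right)
  left_inv := by
    intro q; induction q using Quotient.ind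
    show Quotient.map' ⇑k⁻¹ _ (Quotient.map' ⇑k _ (Quotient.mk _ _)) = _
    rw [Quotient.map'_mk, Quotient.map'_mk]
    simp
  right_inv := by
    intro q; induction q using Quotient.ind
    show Quotient.map' ⇑k _ (Quotient.map' ⇑k⁻¹ _ (Quotient.mk _ _)) = _
    rw [Quotient.map'_mk, Quotient.map'_mk]
    simp

lemma descend_mk (z k : Perm X) (hk : Commute z k) (x : X) :
    descend z k hk (Quotient.mk (zrel z) x) = Quotient.mk (zrel z) (k x) := rfl

/-- Powers of a permutation `τ` of the quotient which is covered by `g`. -/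
lemma pow_mk_eq (z : Perm X) (τ : Perm (Quotient (zrel z))) (g : Perm X)
    (h : ∀ x, τ (Quotient.mk (zrel z) x) = Quotient.mk (zrel z) (g x)) :
    ∀ (m : ℕ) (x : X), (τ ^ m) (Quotient.mk (zrel z) x) = Quotient.mk (zrel z) ((g ^ m) x) := by
  intro m
  induction m with
  | zero => intro x; simp
  | succ m ih =>
    intro x
    rw [pow_succ, pow_succ, Equiv.Perm.mul_apply, Equiv.Perm.mul_apply, h, ih]

/-- The image of `P` in the permutations of the quotient. -/
def pushQ (z : Perm X) (P : Subgroup (Perm X)) : Subgroup (Perm (Quotient (zrel z))) where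
  carrier := {τ | ∃ g ∈ P, ∀ x, τ (Quotient.mk (zrel z) x) = Quotient.mk (zrel z) (g x)}
  one_mem' := ⟨1, P.one_mem, fun x => rfl⟩
  mul_mem' := by
    rintro τ σ ⟨g, hg, hgx⟩ ⟨h, hh, hhx⟩
    exact ⟨g * h, P.mul_mem hg hh, fun x => by
      rw [Equiv.Perm.mul_apply, hhx, hgx, Equiv.Perm.mul_apply]⟩
  inv_mem' := by
    rintro τ ⟨g, hg, hgx⟩
    refine ⟨g⁻¹, P.inv_mem hg, fun x => ?_⟩
    apply τ.injective
    rw [← Equiv.Perm.mul_apply, mul_inv_cancel, Equiv.Perm.one_apply, hgx,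
      ← Equiv.Perm.mul_apply, mul_inv_cancel, Equiv.Perm.one_apply]

lemma pushQ_pgroup {p : ℕ} (z : Perm X) (P : Subgroup (Perm X)) (hP : IsPGroup p P) :
    IsPGroup p (pushQ z P) := by
  rintro ⟨τ, g, hg, hgx⟩
  obtain ⟨e, he⟩ := hP ⟨g, hg⟩
  have hge : g ^ p ^ e = 1 := by
    simpa [Subtype.ext_iff] using he
  refine ⟨e, ?_⟩
  rw [Subtype.ext_iff]
  rw [SubmonoidClass.coe_pow]
  ext q
  induction q using Quotient.ind with
  | _ x => rw [pow_mk_eq z τ g hgx, hge]; rfl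

/-- Key induction: the 2-closure of a `p`-subgroup of `Sym(X)` is a `p`-group,
by strong induction on the cardinality of `X`. -/
lemma key {p : ℕ} (hp : p.Prime) :
    ∀ (n : ℕ) (X : Type u) [Finite X], Nat.card X ≤ n →
      ∀ P : Subgroup (Perm X), IsPGroup p P → IsPGroup p (twoClosure P) := by
  intro n
  induction n using Nat.strong_induction_on with
  | _ n IH =>
    intro X _ hcard P hP
    haveI : Fact p.Prime := ⟨hp⟩
    rcases eq_or_ne P ⊥ with rfl | hne
    · -- trivial group: the 2-closure is trivial
      rintro ⟨π, hπ⟩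
      refine ⟨0, ?_⟩
      have hπ1 : π = 1 := by
        ext x
        obtain ⟨g, hg, h, -⟩ := hπ x x
        rw [Subgroup.mem_bot] at hg
        subst hg
        simpa using h
      rw [Subtype.ext_iff, SubmonoidClass.coe_pow]
      show π ^ p ^ 0 = 1
      rw [hπ1, one_pow]
    · -- obtain a nontrivial central element z of P
      haveI : Nontrivial P := (Subgroup.nontrivial_iff_ne_bot P).2 hne
      haveI : Nontrivial (Subgroup.center P) := hP.center_nontrivial
      obtain ⟨c, hc1⟩ := exists_ne (1 : Subgroup.center (P : Subgroup (Perm X)))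
      set z : Perm X := ((c : P) : Perm X) with hz
      have hz1 : z ≠ 1 := by
        intro h
        apply hc1
        rw [Subtype.ext_iff, Subtype.ext_iff]
        exact h
      have hzP : z ∈ P := (c : P).2
      have hzc : ∀ g ∈ P, Commute z g := by
        intro g hg
        have := (Subgroup.mem_center_iff.1 c.2) ⟨g, hg⟩
        have := congrArg (Subtype.val : P → Perm X) this
        exact (this).symm
      obtain ⟨e, he⟩ := hP ⟨z, hzP⟩
      have hze : z ^ p ^ e = 1 := by simpa [Subtype.ext_iff] using he
      -- every element of the 2-closure commutes with z
      have hKz : ∀ k ∈ twoClosure P, Commute z k := by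
        intro k hk
        ext x
        obtain ⟨g, hg, h1, h2⟩ := hk x (z x)
        rw [Equiv.Perm.mul_apply, Equiv.Perm.mul_apply, h1, h2,
          ← Equiv.Perm.mul_apply, ← Equiv.Perm.mul_apply, (hzc g hg).eq]
      -- the quotient is strictly smaller
      have hQlt : Nat.card (Quotient (zrel z)) < Nat.card X := by
        classical
        haveI := Fintype.ofFinite X
        haveI : Fintype (Quotient (zrel z)) := Fintype.ofFinite _
        rw [Nat.card_eq_fintype_card, Nat.card_eq_fintype_card]
        refine Fintype.card_lt_of_surjective_not_injective (Quotient.mk (zrel z))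
          (Quotient.mk_surjective) ?_
        intro hinj
        apply hz1
        ext x
        have : Quotient.mk (zrel z) (z x) = Quotient.mk (zrel z) x := by
          apply Quotient.sound
          exact ⟨-1, by simp⟩
        simpa using hinj this
      -- main argument
      rintro ⟨k, hk⟩
      have hkz : Commute z k := hKz k hk
      set kQ : Perm (Quotient (zrel z)) := descend z k hkz with hkQdef
      have hkQ : kQ ∈ twoClosure (pushQ z P) := by
        intro q q'
        induction q using Quotient.ind with
        | _ x =>
        induction q' using Quotient.ind with
        | _ y =>
        obtain ⟨g, hg, h1, h2⟩ := hk x y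
        refine ⟨descend z g (hzc g hg), ⟨g, hg, fun x => rfl⟩, ?_, ?_⟩
        · show Quotient.mk (zrel z) (k x) = Quotient.mk (zrel z) (g x)
          rw [h1]
        · show Quotient.mk (zrel z) (k y) = Quotient.mk (zrel z) (g y)
          rw [h2]
      have hQP : IsPGroup p (twoClosure (pushQ z P)) :=
        IH (Nat.card (Quotient (zrel z))) (lt_of_lt_of_le hQlt hcard)
          (Quotient (zrel z)) le_rfl (pushQ z P) (pushQ_pgroup z P hP)
      obtain ⟨a, ha⟩ := hQP ⟨kQ, hkQ⟩
      have hkQa : kQ ^ p ^ a = 1 := by simpa [Subtype.ext_iff] using ha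
      -- k ^ p ^ a acts pointwise as a power of z
      set m : Perm X := k ^ p ^ a with hm
      have hmmem : ∀ x : X, ∃ i : ℤ, m x = (z ^ i) x := by
        intro x
        have : (kQ ^ p ^ a) (Quotient.mk (zrel z) x) = Quotient.mk (zrel z) (m x) :=
          pow_mk_eq z kQ k (fun x => rfl) (p ^ a) x
        rw [hkQa] at this
        simp only [Equiv.Perm.one_apply] at this
        obtain ⟨i, hi⟩ := Quotient.exact this
        exact ⟨i, hi.symm⟩
      have hmz : Commute z m := hkz.pow_right _
      -- hence m ^ p ^ e = 1
      have hmp : m ^ p ^ e = 1 := by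
        ext x
        obtain ⟨i, hi⟩ := hmmem x
        have key2 : ∀ j : ℕ, (m ^ j) x = (z ^ ((j : ℤ) * i)) x := by
          intro j
          induction j with
          | zero => simp
          | succ j ih =>
            rw [pow_succ', Equiv.Perm.mul_apply, ih, ← Equiv.Perm.mul_apply,
              ← (hmz.zpow_left ((j : ℤ) * i)).eq, Equiv.Perm.mul_apply, hi,
              ← Equiv.Perm.mul_apply, ← zpow_add]
            have harith : ((j : ℤ) * i + i) = ((j + 1 : ℕ) : ℤ) * i := by push_cast; ring
            rw [harith]
        rw [key2 (p ^ e)]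
        have : (z ^ (((p ^ e : ℕ) : ℤ) * i)) = 1 := by
          rw [zpow_mul, zpow_natCast, hze, one_zpow]
        rw [this]
      refine ⟨a + e, ?_⟩
      rw [Subtype.ext_iff]
      rw [SubmonoidClass.coe_pow]
      show k ^ p ^ (a + e) = 1
      rw [pow_add, pow_mul]
      exact hmp

end Wielandt2Closure

/-- The 2-closure of a `p`-subgroup of `Sym(X)` (`X` finite) is again a `p`-group. -/
theorem stmt_7 {X : Type*} [Fintype X] {p : ℕ} (hp : p.Prime)
    (P : Subgroup (Equiv.Perm X)) (hP : IsPGroup p P) :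
    IsPGroup p (twoClosure P) := by
  exact Wielandt2Closure.key hp (Nat.card X) X le_rfl P hP
end

section
/- Let H ≤ Sym(X) be transitive admitting a block system B, and let K ⊴ H with K ≤ fix_H(B) (K fixes every block of B setwise), K = T^ℓ a direct product of copies of a nonabelian simple group T, and K restricted to each block B ∈ B isomorphic to T and transitive on B. If L is a minimal nontrivial normal subgroup of K, then the support of L (the set of points moved by some element of L) is a block of H. -/
/-- The support of a subgroup `L` of `Sym(X)`: the points moved by some element. -/
def permSupport {X : Type*} (L : Subgroup (Equiv.Perm X)) : Set X :=
  {x | ∃ g ∈ L, g x ≠ x}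

/-- Lemma on simple-group blocks: with `H` transitive admitting the block system `𝓑`,
`K ⊴ H` with `K ≤ fix_H(𝓑)`, `K ≅ T^ℓ` a power of a nonabelian simple group `T`,
whose restriction to each block is isomorphic to `T` and transitive, the support of a
minimal nontrivial normal subgroup `L` of `K` is a block of `H`. -/
theorem stmt_12 {X : Type*} [Fintype X] {T : Type*} [Group T] [IsSimpleGroup T]
    (hT : ∃ a b : T, a * b ≠ b * a) (ℓ : ℕ)
    (H K L : Subgroup (Equiv.Perm X))
    (htrans : ∀ x y : X, ∃ h ∈ H, h x = y)
    (𝓑 : Set (Set X))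
    (hcover : ∀ x : X, ∃ B ∈ 𝓑, x ∈ B)
    (hdisj : ∀ B ∈ 𝓑, ∀ B' ∈ 𝓑, B ≠ B' → Disjoint B B')
    (hinv : ∀ h ∈ H, ∀ B ∈ 𝓑, (⇑h) '' B ∈ 𝓑)
    -- `K ⊴ H`, `K ≤ fix_H(𝓑)`
    (hKH : K ≤ H) (hKnorm : ∀ h ∈ H, ∀ k ∈ K, h * k * h⁻¹ ∈ K)
    (hKfix : ∀ k ∈ K, ∀ B ∈ 𝓑, (⇑k) '' B = B)
    -- `K ≅ T^ℓ`
    (hKiso : Nonempty (K ≃* (Fin ℓ → T)))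
    -- the restriction of `K` to each block `B` is transitive and isomorphic to `T`:
    (hKBtrans : ∀ B ∈ 𝓑, ∀ x ∈ B, ∀ y ∈ B, ∃ k ∈ K, k x = y)
    (hKBiso : ∀ B ∈ 𝓑, ∃ ψ : K →* T, Function.Surjective ψ ∧
      ∀ k : K, ψ k = 1 ↔ ∀ x ∈ B, (k : Equiv.Perm X) x = x)
    -- `L` is a minimal nontrivial normal subgroup of `K`
    (hLK : L ≤ K) (hLne : L ≠ ⊥) (hLnorm : ∀ k ∈ K, ∀ g ∈ L, k * g * k⁻¹ ∈ L)
    (hLmin : ∀ M : Subgroup (Equiv.Perm X), M ≤ K → M ≠ ⊥ →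
      (∀ k ∈ K, ∀ g ∈ M, k * g * k⁻¹ ∈ M) → M ≤ L → M = L) :
    ∀ h ∈ H, (⇑h) '' permSupport L = permSupport L ∨
      Disjoint ((⇑h) '' permSupport L) (permSupport L) := by
  classical
  -- any subgroup of K normal in K has support a union of blocks
  have blockLem : ∀ M : Subgroup (Equiv.Perm X),
      (∀ k ∈ K, ∀ g ∈ M, k * g * k⁻¹ ∈ M) →
      ∀ B ∈ 𝓑, ∀ x ∈ B, x ∈ permSupport M → ∀ y ∈ B, y ∈ permSupport M := by
    intro M hMnorm B hB x hxB hx y hyB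
    obtain ⟨g, hgM, hgx⟩ := hx
    obtain ⟨k, hkK, hk⟩ := hKBtrans B hB x hxB y hyB
    refine ⟨k * g * k⁻¹, hMnorm k hkK g hgM, ?_⟩
    have h1 : (k * g * k⁻¹) y = k (g x) := by
      simp [Equiv.Perm.mul_apply, ← hk]
    rw [h1, ← hk]
    intro hcontra
    exact hgx (k.injective hcontra)
  intro h hH
  set f := (MulAut.conj h).toMonoidHom with hf
  set L' := L.map f with hL'def
  have memL' : ∀ g : Equiv.Perm X, g ∈ L' ↔ ∃ a ∈ L, h * a * h⁻¹ = g := by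
    intro g
    simp [hL'def, Subgroup.mem_map, hf, MulAut.conj]
  -- support of L' is the image
  have hsupp' : (⇑h) '' permSupport L = permSupport L' := by
    ext z
    constructor
    · rintro ⟨y, ⟨g, hgL, hgy⟩, rfl⟩
      refine ⟨h * g * h⁻¹, (memL' _).2 ⟨g, hgL, rfl⟩, ?_⟩
      simpa [Equiv.Perm.mul_apply] using hgy
    · rintro ⟨g', hg', hg'z⟩
      obtain ⟨a, haL, rfl⟩ := (memL' g').1 hg'
      refine ⟨h⁻¹ z, ⟨a, haL, ?_⟩, by simp⟩
      intro hc
      apply hg'z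
      have : h (a (h⁻¹ z)) = h (h⁻¹ z) := by rw [hc]
      simpa [Equiv.Perm.mul_apply] using this
  have hL'K : L' ≤ K := by
    intro g hg
    obtain ⟨a, haL, rfl⟩ := (memL' g).1 hg
    exact hKnorm h hH a (hLK haL)
  have hL'norm : ∀ k ∈ K, ∀ g ∈ L', k * g * k⁻¹ ∈ L' := by
    intro k hkK g hg
    obtain ⟨a, haL, rfl⟩ := (memL' g).1 hg
    have hk' : h⁻¹ * k * h ∈ K := by
      have := hKnorm h⁻¹ (H.inv_mem hH) k hkK
      simpa using this
    refine (memL' _).2 ⟨(h⁻¹ * k * h) * a * (h⁻¹ * k * h)⁻¹,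
      hLnorm _ hk' a haL, ?_⟩
    group
  have hL'ne : L' ≠ ⊥ := by
    intro hbot
    apply hLne
    rw [Subgroup.eq_bot_iff_forall]
    intro a haL
    have : h * a * h⁻¹ ∈ L' := (memL' _).2 ⟨a, haL, rfl⟩
    rw [hbot, Subgroup.mem_bot] at this
    have : h * a * h⁻¹ * h = h := by rw [this]; group
    have h2 : h * a = h := by
      calc h * a = h * a * h⁻¹ * h := by group
        _ = h := this
    exact mul_left_cancel h2
  by_cases hinter : L ⊓ L' = ⊥
  · -- disjoint case
    right
    rw [hsupp', Set.disjoint_iff_inter_eq_empty]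
    by_contra hne
    obtain ⟨x, hxL', hxL⟩ := Set.nonempty_iff_ne_empty.2 hne
    obtain ⟨B, hB, hxB⟩ := hcover x
    obtain ⟨ψ, hψsurj, hψker⟩ := hKBiso B hB
    -- images of L and L' under ψ are ⊤
    have key : ∀ (M : Subgroup (Equiv.Perm X)) (hMK : M ≤ K),
        (∀ k ∈ K, ∀ g ∈ M, k * g * k⁻¹ ∈ M) → x ∈ permSupport M →
        ∀ t : T, ∃ g : Equiv.Perm X, ∃ hg : g ∈ M, ψ ⟨g, hMK hg⟩ = t := by
      intro M hMK hMnorm hxM t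
      have hnorm : (M.subgroupOf K).Normal := by
        constructor
        intro g hg k
        rw [Subgroup.mem_subgroupOf] at hg ⊢
        have := hMnorm k k.2 g hg
        simpa using this
      have hmap := hnorm.map ψ hψsurj
      rcases IsSimpleGroup.eq_bot_or_eq_top_of_normal _ hmap with hbot | htop
      · exfalso
        obtain ⟨g, hgM, hgx⟩ := hxM
        have : ψ ⟨g, hMK hgM⟩ ∈ (M.subgroupOf K).map ψ :=
          ⟨⟨g, hMK hgM⟩, by simp only [SetLike.mem_coe, Subgroup.mem_subgroupOf]; exact hgM, rfl⟩
        rw [hbot, Subgroup.mem_bot] at this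
        exact hgx ((hψker _).1 this x hxB)
      · have : t ∈ (M.subgroupOf K).map ψ := htop ▸ Subgroup.mem_top t
        obtain ⟨⟨g, hgK⟩, hgM, hgt⟩ := this
        simp only [SetLike.mem_coe, Subgroup.mem_subgroupOf] at hgM
        exact ⟨g, hgM, hgt⟩
    obtain ⟨a, b, hab⟩ := hT
    obtain ⟨g, hgL, hga⟩ := key L hLK hLnorm hxL a
    obtain ⟨g', hg'L', hg'b⟩ := key L' hL'K hL'norm hxL' b
    set gK : K := ⟨g, hLK hgL⟩ with hgK
    set g'K : K := ⟨g', hL'K hg'L'⟩ with hg'K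
    have hcomm : g * g' * g⁻¹ * g'⁻¹ = 1 := by
      have h1 : g * g' * g⁻¹ * g'⁻¹ ∈ L := by
        have := L.mul_mem hgL (hLnorm g' (hL'K hg'L') g⁻¹ (L.inv_mem hgL))
        convert this using 1
        group
      have h2 : g * g' * g⁻¹ * g'⁻¹ ∈ L' :=
        L'.mul_mem (hL'norm g (hLK hgL) g' hg'L') (L'.inv_mem hg'L')
      have : g * g' * g⁻¹ * g'⁻¹ ∈ L ⊓ L' := ⟨h1, h2⟩
      rwa [hinter, Subgroup.mem_bot] at this
    have hcommK : gK * g'K * gK⁻¹ * g'K⁻¹ = 1 := by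
      apply Subtype.ext
      push_cast
      exact hcomm
    have hψ1 : a * b * a⁻¹ * b⁻¹ = 1 := by
      rw [← hga, ← hg'b, ← map_inv, ← map_inv, ← map_mul, ← map_mul, ← map_mul,
        hcommK, map_one]
    apply hab
    have h3 : a * b * a⁻¹ = b := by
      have := mul_eq_one_iff_eq_inv.1 hψ1
      simpa using this
    calc a * b = a * b * a⁻¹ * a := by group
      _ = b * a := by rw [h3]
  · -- equal case
    left
    have hM : L ⊓ L' = L := hLmin (L ⊓ L') (le_trans inf_le_left hLK) hinter
      (fun k hk g hg => ⟨hLnorm k hk g hg.1, hL'norm k hk g hg.2⟩) inf_le_left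
    have hLle : L ≤ L' := by rw [← hM]; exact inf_le_right
    have hcard : Nat.card L' ≤ Nat.card L := by
      have e := (MulAut.conj h).subgroupMap L
      exact le_of_eq (Nat.card_congr e.toEquiv.symm)
    have : L = L' := Subgroup.eq_of_le_of_card_ge hLle hcard
    rw [hsupp', ← this]
end

section
/- Let p, q be distinct primes, S = {(kp, 0) : k ∈ Z_p} ∪ {(1,1)} ⊆ Z_{p²} × Z_q, and Γ = Cay(Z_{p²} × Z_q, S). Consider the blocks B_i = {(i, j) : j ∈ Z_q} for i ∈ Z_{p²} (blocks of size q given by the orbits of the Z_q factor). Then every automorphism of Γ that maps the block B_0 = {(0,j) : j ∈ Z_q} to itself setwise must map the block B_p = {(p,j): j ∈ Z_q} to itself setwise. -/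
/-- For the Cayley digraph `Γ = Cay(Z_{p²} × Z_q, S)` with
`S = {(kp, 0) : k} ∪ {(1,1)}`, every automorphism of `Γ` fixing the block
`B_0 = {(0, j)}` setwise also fixes the block `B_p = {(p, j)}` setwise. -/
theorem stmt_17 (p q : ℕ) (hp : p.Prime) (hq : q.Prime) (hpq : p ≠ q)
    (S : Set (ZMod (p ^ 2) × ZMod q))
    (hS : S = {v | (∃ k : ZMod (p ^ 2), v = ((p : ZMod (p ^ 2)) * k, 0)) ∨ v = (1, 1)})
    (π : Equiv.Perm (ZMod (p ^ 2) × ZMod q))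
    (haut : ∀ u v : ZMod (p ^ 2) × ZMod q, v - u ∈ S ↔ π v - π u ∈ S)
    (hB0 : (⇑π) '' {v : ZMod (p ^ 2) × ZMod q | v.1 = 0} =
      {v : ZMod (p ^ 2) × ZMod q | v.1 = 0}) :
    (⇑π) '' {v : ZMod (p ^ 2) × ZMod q | v.1 = (p : ZMod (p ^ 2))} =
      {v : ZMod (p ^ 2) × ZMod q | v.1 = (p : ZMod (p ^ 2))} := by
  haveI : Fact p.Prime := ⟨hp⟩
  haveI : Fact q.Prime := ⟨hq⟩
  -- `-(1,1) ∉ S`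
  have hpk : ∀ k : ZMod (p ^ 2), (p : ZMod (p ^ 2)) * k ≠ -1 := by
    intro k hk
    have h2 : (p : ℕ) ∣ p ^ 2 := dvd_pow_self p two_ne_zero
    have := congrArg (ZMod.castHom h2 (ZMod p)) hk
    rw [map_mul, map_neg, map_one, map_natCast, ZMod.natCast_self, zero_mul] at this
    exact one_ne_zero (neg_eq_zero.mp this.symm)
  have hneg11 : ¬ ((-(1, 1) : ZMod (p ^ 2) × ZMod q) ∈ S) := by
    rw [hS]
    rintro (⟨k, hk⟩ | h)
    · have := congrArg Prod.fst hk
      simp at this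
      exact hpk k this.symm
    · have h1 := congrArg Prod.fst h
      have h2 := congrArg Prod.snd h
      simp at h1 h2
      -- h1 : (-1 : ZMod (p^2)) = 1, h2 : (-1 : ZMod q) = 1
      rcases Nat.Prime.eq_two_or_odd' hq with h2q | hoq
      · -- q = 2, so p is odd, p^2 > 2
        subst h2q
        have hp2 : p ≠ 2 := hpq
        have : ((2 : ℕ) : ZMod (p ^ 2)) = 0 := by
          push_cast; linear_combination -h1
        rw [ZMod.natCast_eq_zero_iff] at this
        have hple : 2 < p ^ 2 := by
          nlinarith [(hp.two_le).lt_of_ne (Ne.symm hp2)]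
        exact absurd (Nat.le_of_dvd two_pos this) (by omega)
      · -- q odd
        have : ((2 : ℕ) : ZMod q) = 0 := by
          push_cast; linear_combination -h2
        rw [ZMod.natCast_eq_zero_iff] at this
        have h3 := Nat.le_of_dvd two_pos this
        have h4 := hq.two_le
        have hq2 : q = 2 := le_antisymm h3 h4
        rw [hq2] at hoq
        simp [Nat.odd_iff] at hoq
  have h11S : ((1, 1) : ZMod (p ^ 2) × ZMod q) ∈ S := by
    rw [hS]; right; rfl
  -- key: π commutes with translation by (1,1)
  have hkey : ∀ u : ZMod (p ^ 2) × ZMod q,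
      π (u + (1, 1)) = π u + (1, 1) := by
    intro u
    set v := u + (1, 1) with hv
    have h1 : π v - π u ∈ S := by
      rw [← haut]; simpa [hv] using h11S
    have h2 : π u - π v ∉ S := by
      rw [← haut]
      simpa [hv, sub_eq_iff_eq_add] using hneg11
    rw [hS] at h1
    rcases h1 with ⟨k, hk⟩ | h
    · exfalso
      apply h2
      rw [hS]
      left
      refine ⟨-k, ?_⟩
      have : π u - π v = -(π v - π u) := by ring
      rw [this, hk]
      ext <;> simp
    · have : π v = π u + (1, 1) := by
        rw [← h]; ring
      exact this
  -- iterate: π commutes with translation by (n, n)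
  have hiter : ∀ n : ℕ, ∀ u : ZMod (p ^ 2) × ZMod q,
      π (u + ((n : ZMod (p ^ 2)), (n : ZMod q)))
        = π u + ((n : ZMod (p ^ 2)), (n : ZMod q)) := by
    intro n
    induction n with
    | zero => intro u; simp; rw [Prod.mk_zero_zero, add_zero, add_zero]
    | succ n ih =>
      intro u
      have e1 : u + (((n + 1 : ℕ) : ZMod (p ^ 2)), ((n + 1 : ℕ) : ZMod q))
          = (u + (1, 1)) + ((n : ZMod (p ^ 2)), (n : ZMod q)) := by
        ext <;> push_cast <;> simp <;> ring
      rw [e1, ih, hkey]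
      ext <;> push_cast <;> simp <;> ring
  -- conclude
  ext w
  simp only [Set.mem_image, Set.mem_setOf_eq]
  constructor
  · rintro ⟨v, hv1, rfl⟩
    set u := v - ((p : ZMod (p ^ 2)), (p : ZMod q)) with hu
    have huv : v = u + ((p : ZMod (p ^ 2)), (p : ZMod q)) := by
      rw [hu]; ring
    have hu0 : u.1 = 0 := by
      rw [hu]; simp [hv1]
    have : π u ∈ {v : ZMod (p ^ 2) × ZMod q | v.1 = 0} := by
      rw [← hB0]; exact ⟨u, hu0, rfl⟩
    have hpu : (π u).1 = 0 := this
    rw [huv, hiter p u]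
    simp [hpu]
  · intro hw
    have hw0 : (w - ((p : ZMod (p ^ 2)), (p : ZMod q))) ∈
        {v : ZMod (p ^ 2) × ZMod q | v.1 = 0} := by
      simp [hw]
    rw [← hB0] at hw0
    obtain ⟨u, hu0, hu⟩ := hw0
    simp only [Set.mem_setOf_eq] at hu0
    refine ⟨u + ((p : ZMod (p ^ 2)), (p : ZMod q)), by simp [hu0], ?_⟩
    rw [hiter p u, hu]
    ring
end
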